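/- For every integer n ≥ 0, the sum over all Dyck paths P of length 2n of 2^(number of downsteps of P that leave from odd height) equals the number of big Schröder paths of length 2n. -/

import Mathlib

/-- A step of a Schröder path: upstep, downstep, or a *double* horizontal step. -/
inductive SchStep : Type
  | up : SchStep
  | down : SchStep
  | horiz : SchStep
deriving DecidableEq

/-- The number of unit steps a step occupies: `horiz` is a double horizontal step. -/
def SchStep.len : SchStep → ℕ
  | .up => 1
  | .down => 1
  | .horiz => 2

/-- The change in height produced by a step. -/
def SchStep.rise : SchStep → ℤ
  | .up => 1
  | .down => -1
  | .horiz => 0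

/-- The length of a path (a double horizontal step counts 2). -/
def pathLen (p : List SchStep) : ℕ := (p.map SchStep.len).sum

/-- The final height of a path started at height 0. -/
def pathHeight (p : List SchStep) : ℤ := (p.map SchStep.rise).sum

/-- A big Schröder path: ends at height 0 and never goes below the x-axis. -/
def IsBigSchroeder (p : List SchStep) : Prop :=
  pathHeight p = 0 ∧ ∀ q : List SchStep, q <+: p → 0 ≤ pathHeight q

/-- A little Schröder path: a big Schröder path with no double horizontal step at
height 0. -/
def IsLittleSchroeder (p : List SchStep) : Prop :=
  IsBigSchroeder p ∧ ∀ q r : List SchStep, p = q ++ SchStep.horiz :: r → pathHeight q ≠ 0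

/-- A Dyck path is a list of booleans: `true` is an upstep, `false` is a downstep. -/
def dyckHeight (p : List Bool) : ℤ := (p.map fun b => if b then (1 : ℤ) else -1).sum

/-- A Dyck path: ends at height 0 and never goes below the x-axis. -/
def IsDyck (p : List Bool) : Prop :=
  dyckHeight p = 0 ∧ ∀ q : List Bool, q <+: p → 0 ≤ dyckHeight q

/-- The number of downsteps of `p` leaving from odd height. -/
def oddDownCount (p : List Bool) : ℕ :=
  (List.range p.length).countP fun i =>
    decide (p.getD i true = false ∧ dyckHeight (p.take i) % 2 = 1)

/-!
View a Dyck path as a big Schröder path without horizontal steps, and weigh a path started at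
height `h` by the product over its steps of `2` for a downstep from odd height, `0` for a
horizontal step and `1` otherwise. Let `E n` and `O n` be the total weights of the big Schröder
paths of length `2n` started at even and at odd height. The first-return decomposition
`q = U a D b` gives, over `k + l = n`,
`E (n + 1) = ∑ 2 * O k * E l` and `O (n + 1) = ∑ E k * O l`,
hence `E (n + 1) = 2 * O (n + 1)`. Substituting this back, `E` satisfies the Schröder recurrence
`r (n + 1) = r n + ∑ r k * r l`, which the same decomposition (where a path may also start with a
horizontal step) gives for the number of big Schröder paths.
-/

open Finset

instance : Fintype SchStep :=
  ⟨{.up, .down, .horiz}, fun s => by cases s <;> simp⟩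

@[simp] lemma pathHeight_nil : pathHeight [] = 0 := rfl

@[simp] lemma pathHeight_cons (s : SchStep) (p : List SchStep) :
    pathHeight (s :: p) = s.rise + pathHeight p := by
  simp [pathHeight]

@[simp] lemma pathHeight_append (p q : List SchStep) :
    pathHeight (p ++ q) = pathHeight p + pathHeight q := by
  simp [pathHeight]

@[simp] lemma pathLen_nil : pathLen [] = 0 := rfl

@[simp] lemma pathLen_cons (s : SchStep) (p : List SchStep) :
    pathLen (s :: p) = s.len + pathLen p := by
  simp [pathLen]

@[simp] lemma pathLen_append (p q : List SchStep) :
    pathLen (p ++ q) = pathLen p + pathLen q := by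
  simp [pathLen]

lemma pathLen_emod_two (p : List SchStep) : (pathLen p : ℤ) % 2 = pathHeight p % 2 := by
  induction p with
  | nil => rfl
  | cons s p ih => cases s <;> simp [SchStep.len, SchStep.rise] <;> omega

lemma length_le_pathLen (p : List SchStep) : p.length ≤ pathLen p := by
  induction p with
  | nil => simp
  | cons s p ih => cases s <;> simp [SchStep.len] <;> omega

def NonnegFrom (h : ℤ) (p : List SchStep) : Prop :=
  ∀ q, q <+: p → 0 ≤ h + pathHeight q

lemma NonnegFrom.nonneg {h : ℤ} {p : List SchStep} (hp : NonnegFrom h p) : 0 ≤ h := by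
  simpa using hp [] List.nil_prefix

lemma NonnegFrom.mono {h h' : ℤ} {p : List SchStep} (hp : NonnegFrom h p) (hh : h ≤ h') :
    NonnegFrom h' p :=
  fun q hq => (hp q hq).trans (by omega)

@[simp] lemma nonnegFrom_nil {h : ℤ} : NonnegFrom h [] ↔ 0 ≤ h := by
  simp [NonnegFrom]

@[simp] lemma nonnegFrom_cons {h : ℤ} {s : SchStep} {p : List SchStep} :
    NonnegFrom h (s :: p) ↔ 0 ≤ h ∧ NonnegFrom (h + s.rise) p := by
  refine ⟨fun hp => ⟨hp.nonneg, fun q hq => ?_⟩, fun ⟨h0, hp⟩ q hq => ?_⟩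
  · simpa [add_assoc] using hp (s :: q) ((List.prefix_cons_inj s).2 hq)
  · rcases List.prefix_cons_iff.1 hq with rfl | ⟨t, rfl, ht⟩
    · simpa
    · simpa [add_assoc] using hp t ht

lemma nonnegFrom_append {h : ℤ} {p q : List SchStep} :
    NonnegFrom h (p ++ q) ↔ NonnegFrom h p ∧ NonnegFrom (h + pathHeight p) q := by
  induction p generalizing h with
  | nil => simpa using fun hq : NonnegFrom h q => hq.nonneg
  | cons s p ih => simp [ih, and_assoc, add_assoc]

lemma isBigSchroeder_iff_nonnegFrom {p : List SchStep} :
    IsBigSchroeder p ↔ pathHeight p = 0 ∧ NonnegFrom 0 p := by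
  simp [IsBigSchroeder, NonnegFrom]

/-- First-return decomposition: a path from height `k + 1` to `0` first reaches `0` by a
downstep, after a stretch that stays at height `≥ 1`. -/
lemma exists_eq_append_down_cons {p : List SchStep} {k : ℤ} (hk : 0 ≤ k)
    (hp : NonnegFrom (k + 1) p) (hend : k + pathHeight p = -1) :
    ∃ a b, p = a ++ .down :: b ∧ NonnegFrom k a ∧ k + pathHeight a = 0 ∧
      IsBigSchroeder b := by
  induction p generalizing k with
  | nil => simp at hend; omega
  | cons s p ih =>
    rw [nonnegFrom_cons] at hp
    by_cases hfirst : s = .down ∧ k = 0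
    · obtain ⟨rfl, rfl⟩ := hfirst
      refine ⟨[], p, rfl, by simp, by simp, ?_⟩
      simp only [pathHeight_cons, SchStep.rise] at hend
      exact isBigSchroeder_iff_nonnegFrom.2 ⟨by omega, by simpa [SchStep.rise] using hp.2⟩
    · have hk' : 0 ≤ k + s.rise := by
        cases s <;> simp [SchStep.rise] at hfirst ⊢ <;> omega
      obtain ⟨a, b, rfl, ha, ha0, hb⟩ :=
        ih hk' (by simpa [add_right_comm] using hp.2) (by simp at hend; omega)
      exact ⟨s :: a, b, rfl, nonnegFrom_cons.2 ⟨hk, ha⟩, by simp; omega, hb⟩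

/-- The first return is unique: a longer candidate would pass below height `0` just after the
shorter one. -/
lemma eq_of_append_down_cons_eq {k : ℤ} {a a' b b' : List SchStep}
    (h : a ++ .down :: b = a' ++ .down :: b') (ha : NonnegFrom k a) (ha0 : k + pathHeight a = 0)
    (ha' : NonnegFrom k a') (ha0' : k + pathHeight a' = 0) : a = a' := by
  wlog hlen : a.length ≤ a'.length generalizing a a' b b'
  · exact (this h.symm ha' ha0' ha ha0 (by omega)).symm
  rcases hlen.lt_or_eq with hlt | heq
  · have hpre : a ++ [.down] <+: a' :=
      List.prefix_of_prefix_length_le ⟨b, by simpa using h⟩ (List.prefix_append a' _)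
        (by simpa using hlt)
    have := ha' _ hpre
    simp [SchStep.rise] at this
    omega
  · exact (List.append_inj h heq).1


lemma isBigSchroeder_iff {q : List SchStep} :
    IsBigSchroeder q ↔ q = [] ∨ (∃ t, q = .horiz :: t ∧ IsBigSchroeder t) ∨
      ∃ a b, q = .up :: (a ++ .down :: b) ∧ IsBigSchroeder a ∧ IsBigSchroeder b := by
  simp only [isBigSchroeder_iff_nonnegFrom]
  constructor
  · rintro ⟨hq0, hq⟩
    rcases q with _ | ⟨s, t⟩
    · exact .inl rfl
    rw [nonnegFrom_cons] at hq
    rcases s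
    · obtain ⟨a, b, rfl, ha, ha0, hb⟩ :=
        exists_eq_append_down_cons le_rfl (by simpa [SchStep.rise] using hq.2)
          (by simp [SchStep.rise] at hq0; omega)
      exact .inr (.inr ⟨a, b, rfl, ⟨by simpa using ha0, ha⟩,
        isBigSchroeder_iff_nonnegFrom.1 hb⟩)
    · simpa [SchStep.rise] using hq.2.nonneg
    · exact .inr (.inl ⟨t, rfl, by simpa [SchStep.rise] using hq0,
        by simpa [SchStep.rise] using hq.2⟩)
  · rintro (rfl | ⟨t, rfl, ht0, ht⟩ | ⟨a, b, rfl, ⟨ha0, ha⟩, hb0, hb⟩)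
    · simp
    · simpa [SchStep.rise] using ⟨ht0, ht⟩
    · simp only [pathHeight_cons, pathHeight_append, nonnegFrom_cons, nonnegFrom_append,
        SchStep.rise, ha0, hb0]
      exact ⟨by norm_num, le_rfl, ha.mono (by norm_num), by norm_num, hb⟩

lemma IsBigSchroeder.even_pathLen {q : List SchStep} (hq : IsBigSchroeder q) :
    Even (pathLen q) := by
  have := pathLen_emod_two q
  rw [hq.1] at this
  exact Nat.even_iff.2 (by omega)

lemma finite_setOf_isBigSchroeder (n : ℕ) :
    {q : List SchStep | IsBigSchroeder q ∧ pathLen q = 2 * n}.Finite :=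
  (List.finite_length_le SchStep (2 * n)).subset fun q hq =>
    hq.2 ▸ length_le_pathLen q

noncomputable def bigSchroederPaths (n : ℕ) : Finset (List SchStep) :=
  (finite_setOf_isBigSchroeder n).toFinset

@[simp] lemma mem_bigSchroederPaths {n : ℕ} {q : List SchStep} :
    q ∈ bigSchroederPaths n ↔ IsBigSchroeder q ∧ pathLen q = 2 * n := by
  simp [bigSchroederPaths]

lemma bigSchroederPaths_zero : bigSchroederPaths 0 = {[]} := by
  ext q
  simp only [mem_bigSchroederPaths, Finset.mem_singleton, mul_zero]
  refine ⟨fun ⟨_, hq⟩ => List.eq_nil_of_length_eq_zero ?_, ?_⟩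
  · have := length_le_pathLen q; omega
  · rintro rfl; simp [IsBigSchroeder]

lemma bigSchroederPaths_succ (n : ℕ) :
    bigSchroederPaths (n + 1) =
      (bigSchroederPaths n).image (.horiz :: ·) ∪
        ((antidiagonal n).sigma fun x => bigSchroederPaths x.1 ×ˢ bigSchroederPaths x.2).image
          fun x => .up :: (x.2.1 ++ .down :: x.2.2) := by
  ext q
  simp only [mem_union, mem_image, mem_sigma, HasAntidiagonal.mem_antidiagonal, mem_product,
    mem_bigSchroederPaths, Sigma.exists, Prod.exists]
  constructor
  · rintro ⟨hq, hlen⟩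
    rcases isBigSchroeder_iff.1 hq with rfl | ⟨t, rfl, ht⟩ | ⟨a, b, rfl, ha, hb⟩
    · simp at hlen
    · exact .inl ⟨t, ⟨ht, by simp [SchStep.len] at hlen; omega⟩, rfl⟩
    · obtain ⟨k, hk⟩ := ha.even_pathLen
      obtain ⟨l, hl⟩ := hb.even_pathLen
      simp [SchStep.len] at hlen
      exact .inr ⟨k, l, a, b, ⟨by omega, ⟨ha, by omega⟩, hb, by omega⟩, rfl⟩
  · rintro
      (⟨t, ⟨ht, hlen⟩, rfl⟩ | ⟨k, l, a, b, ⟨hkl, ⟨ha, hla⟩, hb, hlb⟩, rfl⟩)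
    · exact ⟨isBigSchroeder_iff.2 (.inr (.inl ⟨t, rfl, ht⟩)), by simp [SchStep.len]; omega⟩
    · exact ⟨isBigSchroeder_iff.2 (.inr (.inr ⟨a, b, rfl, ha, hb⟩)),
        by simp [SchStep.len]; omega⟩

lemma sum_bigSchroederPaths_succ {M : Type*} [AddCommMonoid M] (f : List SchStep → M)
    (n : ℕ) :
    ∑ q ∈ bigSchroederPaths (n + 1), f q =
      ∑ t ∈ bigSchroederPaths n, f (.horiz :: t) +
        ∑ x ∈ antidiagonal n, ∑ a ∈ bigSchroederPaths x.1, ∑ b ∈ bigSchroederPaths x.2,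
          f (.up :: (a ++ .down :: b)) := by
  classical
  rw [bigSchroederPaths_succ, sum_union, sum_image, sum_image, sum_sigma]
  · simp only [sum_product]
  · rintro ⟨⟨k, l⟩, a, b⟩ hx ⟨⟨k', l'⟩, a', b'⟩ hx' h
    simp only [coe_sigma, Set.mem_sigma_iff, mem_coe, HasAntidiagonal.mem_antidiagonal, mem_product,
      mem_bigSchroederPaths] at hx hx'
    simp only [List.cons.injEq, true_and] at h
    have ha := isBigSchroeder_iff_nonnegFrom.1 hx.2.1.1
    have ha' := isBigSchroeder_iff_nonnegFrom.1 hx'.2.1.1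
    obtain rfl := eq_of_append_down_cons_eq (k := 0) h ha.2 (by simp [ha.1]) ha'.2
      (by simp [ha'.1])
    obtain rfl : b = b' := by simpa using h
    obtain rfl : k = k' := by omega
    obtain rfl : l = l' := by omega
    rfl
  · simp
  · simp only [disjoint_left, mem_image]
    rintro _ ⟨t, -, rfl⟩ ⟨x, -, hx⟩
    simp at hx

/-- Horizontal steps weigh `0`, so only the paths without them, i.e. the Dyck paths, count. -/
def SchStep.weight : SchStep → ℤ → ℕ
  | .up, _ => 1
  | .down, h => if h % 2 = 1 then 2 else 1
  | .horiz, _ => 0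

lemma SchStep.weight_add_two (s : SchStep) (h : ℤ) : s.weight (h + 2) = s.weight h := by
  cases s <;> simp [SchStep.weight, Int.add_emod_right]

def pathWeight : ℤ → List SchStep → ℕ
  | _, [] => 1
  | h, s :: p => s.weight h * pathWeight (h + s.rise) p

@[simp] lemma pathWeight_nil (h : ℤ) : pathWeight h [] = 1 := rfl

@[simp] lemma pathWeight_cons (h : ℤ) (s : SchStep) (p : List SchStep) :
    pathWeight h (s :: p) = s.weight h * pathWeight (h + s.rise) p := rfl

lemma pathWeight_append (h : ℤ) (p q : List SchStep) :
    pathWeight h (p ++ q) = pathWeight h p * pathWeight (h + pathHeight p) q := by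
  induction p generalizing h with
  | nil => simp
  | cons s p ih => simp [ih, mul_assoc, add_assoc]

lemma pathWeight_add_two (h : ℤ) (p : List SchStep) : pathWeight (h + 2) p = pathWeight h p := by
  induction p generalizing h with
  | nil => rfl
  | cons s p ih => simp [SchStep.weight_add_two, add_right_comm h 2, ih]

lemma pathWeight_eq_zero_of_horiz_mem {h : ℤ} {q : List SchStep} (hq : .horiz ∈ q) :
    pathWeight h q = 0 := by
  induction q generalizing h with
  | nil => simp at hq
  | cons s q ih =>
    rcases List.mem_cons.1 hq with rfl | hq
    · simp [SchStep.weight]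
    · simp [ih hq]

lemma pathWeight_up_down {h : ℤ} {a : List SchStep} (ha : pathHeight a = 0) (b : List SchStep) :
    pathWeight h (.up :: (a ++ .down :: b)) =
      SchStep.down.weight (h + 1) * pathWeight (h + 1) a * pathWeight h b := by
  simp only [pathWeight_cons, pathWeight_append, ha, SchStep.rise, add_zero, add_neg_cancel_right,
    SchStep.weight, one_mul]
  ring

noncomputable def weightedCount (h : ℤ) (n : ℕ) : ℕ :=
  ∑ q ∈ bigSchroederPaths n, pathWeight h q

lemma weightedCount_zero (h : ℤ) : weightedCount h 0 = 1 := by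
  simp [weightedCount, bigSchroederPaths_zero]

lemma weightedCount_add_two (h : ℤ) (n : ℕ) : weightedCount (h + 2) n = weightedCount h n := by
  simp [weightedCount, pathWeight_add_two]

lemma weightedCount_succ (h : ℤ) (n : ℕ) :
    weightedCount h (n + 1) = ∑ x ∈ antidiagonal n,
      SchStep.down.weight (h + 1) * weightedCount (h + 1) x.1 * weightedCount h x.2 := by
  rw [weightedCount, sum_bigSchroederPaths_succ]
  simp only [pathWeight_eq_zero_of_horiz_mem List.mem_cons_self, sum_const_zero, zero_add]
  refine sum_congr rfl fun x _ => ?_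
  rw [mul_assoc, weightedCount, weightedCount, sum_mul_sum, mul_sum]
  refine sum_congr rfl fun a ha => ?_
  rw [mul_sum]
  refine sum_congr rfl fun b _ => ?_
  rw [pathWeight_up_down (mem_bigSchroederPaths.1 ha).1.1, mul_assoc]

lemma weightedCount_zero_succ_eq_sum (n : ℕ) :
    weightedCount 0 (n + 1) =
      ∑ x ∈ antidiagonal n, 2 * weightedCount 1 x.1 * weightedCount 0 x.2 :=
  weightedCount_succ 0 n

lemma weightedCount_one_succ_eq_sum (n : ℕ) :
    weightedCount 1 (n + 1) =
      ∑ x ∈ antidiagonal n, weightedCount 0 x.1 * weightedCount 1 x.2 := by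
  have h2 : weightedCount 2 = weightedCount 0 := funext (weightedCount_add_two 0)
  simpa [SchStep.weight, h2] using weightedCount_succ 1 n

lemma weightedCount_zero_succ_eq_two_mul (n : ℕ) :
    weightedCount 0 (n + 1) = 2 * weightedCount 1 (n + 1) := by
  rw [weightedCount_zero_succ_eq_sum, weightedCount_one_succ_eq_sum, ← Nat.sum_antidiagonal_swap,
    mul_sum]
  exact sum_congr rfl fun x _ => by simp only [Prod.fst_swap, Prod.snd_swap]; ring

lemma weightedCount_zero_succ (n : ℕ) :
    weightedCount 0 (n + 1) =
      weightedCount 0 n + ∑ x ∈ antidiagonal n, weightedCount 0 x.1 * weightedCount 0 x.2 := by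
  rw [weightedCount_zero_succ_eq_sum]
  cases n with
  | zero => simp [weightedCount_zero]
  | succ n =>
    rw [Nat.sum_antidiagonal_succ, Nat.sum_antidiagonal_succ]
    simp only [weightedCount_zero, ← weightedCount_zero_succ_eq_two_mul, mul_assoc]
    ring

lemma card_bigSchroederPaths_succ (n : ℕ) :
    #(bigSchroederPaths (n + 1)) = #(bigSchroederPaths n) +
      ∑ x ∈ antidiagonal n, #(bigSchroederPaths x.1) * #(bigSchroederPaths x.2) := by
  simpa only [sum_const, smul_eq_mul, mul_one] using
    sum_bigSchroederPaths_succ (fun _ => (1 : ℕ)) n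

lemma card_bigSchroederPaths_eq_weightedCount (n : ℕ) :
    #(bigSchroederPaths n) = weightedCount 0 n := by
  induction n using Nat.strong_induction_on with
  | _ n ih =>
    cases n with
    | zero => simp [bigSchroederPaths_zero, weightedCount_zero]
    | succ n =>
      rw [card_bigSchroederPaths_succ, weightedCount_zero_succ, ih n n.lt_succ_self]
      refine congrArg _ (sum_congr rfl fun x hx => ?_)
      rw [HasAntidiagonal.mem_antidiagonal] at hx
      rw [ih x.1 (by omega), ih x.2 (by omega)]

def SchStep.ofBool : Bool → SchStep
  | true => .up
  | false => .down

lemma SchStep.ofBool_injective : Function.Injective SchStep.ofBool := by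
  decide

lemma dyckHeight_eq_pathHeight_map (p : List Bool) : dyckHeight p = pathHeight (p.map .ofBool) := by
  induction p with
  | nil => rfl
  | cons b p ih => cases b <;> simp_all [dyckHeight, SchStep.ofBool, SchStep.rise]

lemma pathLen_map_ofBool (p : List Bool) : pathLen (p.map .ofBool) = p.length := by
  induction p with
  | nil => rfl
  | cons b p ih => cases b <;> simp [ih, SchStep.ofBool, SchStep.len, add_comm]

lemma isDyck_iff_isBigSchroeder_map (p : List Bool) :
    IsDyck p ↔ IsBigSchroeder (p.map .ofBool) := by
  simp only [IsDyck, IsBigSchroeder, List.prefix_map_iff, dyckHeight_eq_pathHeight_map]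
  exact and_congr_right fun _ =>
    ⟨fun h q ⟨l, hl, hq⟩ => hq ▸ h l hl, fun h l hl => h _ ⟨l, hl, rfl⟩⟩

lemma exists_map_ofBool_eq {q : List SchStep} (hq : .horiz ∉ q) :
    ∃ p : List Bool, p.map .ofBool = q := by
  induction q with
  | nil => exact ⟨[], rfl⟩
  | cons s q ih =>
    obtain ⟨p, rfl⟩ := ih (by simp_all)
    cases s
    · exact ⟨true :: p, rfl⟩
    · exact ⟨false :: p, rfl⟩
    · simp at hq

def oddDownCountFrom (h : ℤ) (p : List Bool) : ℕ :=
  (List.range p.length).countP fun i =>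
    decide (p.getD i true = false ∧ (h + dyckHeight (p.take i)) % 2 = 1)

lemma oddDownCountFrom_cons (h : ℤ) (b : Bool) (p : List Bool) :
    oddDownCountFrom h (b :: p) = (if b = false ∧ h % 2 = 1 then 1 else 0) +
      oddDownCountFrom (h + (SchStep.ofBool b).rise) p := by
  rw [oddDownCountFrom, List.length_cons, List.range_succ_eq_map, List.countP_cons,
    List.countP_map, add_comm]
  congr 1
  · simp [dyckHeight]
  · simp [oddDownCountFrom, Function.comp_def, dyckHeight_eq_pathHeight_map, add_assoc]

lemma two_pow_oddDownCountFrom (h : ℤ) (p : List Bool) :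
    2 ^ oddDownCountFrom h p = pathWeight h (p.map .ofBool) := by
  induction p generalizing h with
  | nil => simp [oddDownCountFrom]
  | cons b p ih =>
    rw [oddDownCountFrom_cons, pow_add, ih, List.map_cons, pathWeight_cons]
    congr 1
    cases b <;> split_ifs <;> simp_all [SchStep.ofBool, SchStep.weight]

lemma two_pow_oddDownCount (p : List Bool) :
    2 ^ oddDownCount p = pathWeight 0 (p.map .ofBool) := by
  rw [← two_pow_oddDownCountFrom]
  simp [oddDownCount, oddDownCountFrom]

lemma finite_setOf_isDyck (n : ℕ) : {p : List Bool | IsDyck p ∧ p.length = 2 * n}.Finite :=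
  (List.finite_length_le Bool (2 * n)).subset fun _ hp => hp.2.le

lemma sum_two_pow_oddDownCount (n : ℕ) :
    ∑ p ∈ (finite_setOf_isDyck n).toFinset, 2 ^ oddDownCount p = weightedCount 0 n := by
  classical
  have hinj : Set.InjOn (List.map SchStep.ofBool) (finite_setOf_isDyck n).toFinset :=
    (List.map_injective_iff.2 SchStep.ofBool_injective).injOn
  rw [weightedCount,
    ← sum_subset (s₁ := (finite_setOf_isDyck n).toFinset.image (List.map SchStep.ofBool)),
    sum_image hinj]
  · exact sum_congr rfl fun p _ => two_pow_oddDownCount p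
  · intro q hq
    simp only [mem_image, Set.Finite.mem_toFinset, Set.mem_ofPred_eq] at hq
    obtain ⟨p, ⟨hp, hlen⟩, rfl⟩ := hq
    simpa [← isDyck_iff_isBigSchroeder_map, pathLen_map_ofBool] using ⟨hp, hlen⟩
  · intro q hq hq'
    apply pathWeight_eq_zero_of_horiz_mem
    by_contra hhoriz
    obtain ⟨p, rfl⟩ := exists_map_ofBool_eq hhoriz
    rw [mem_bigSchroederPaths, ← isDyck_iff_isBigSchroeder_map, pathLen_map_ofBool] at hq
    exact hq' (mem_image_of_mem _ ((finite_setOf_isDyck n).mem_toFinset.2 hq))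

/-- The total weight of Dyck paths of length `2n`, where each path is weighted by
`2 ^ (number of downsteps from odd height)`, equals the number of big Schröder paths
of length `2n`. -/
theorem weighted_dyck_eq_big_schroeder (n : ℕ) :
    (∑ᶠ p ∈ {p : List Bool | IsDyck p ∧ p.length = 2 * n}, 2 ^ oddDownCount p) =
      Nat.card {q : List SchStep // IsBigSchroeder q ∧ pathLen q = 2 * n} := by
  rw [finsum_mem_eq_finite_toFinset_sum _ (finite_setOf_isDyck n), sum_two_pow_oddDownCount,
    ← card_bigSchroederPaths_eq_weightedCount]
  exact (Nat.card_eq_card_finite_toFinset (finite_setOf_isBigSchroeder n)).symm
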